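/- Let N be the 2n×2n matrix over K defined by N_{b,a} = B^{(2n−1−b) b}_{a (2n−1−a)} for a, b ∈ {0, ..., 2n−1} (the matrix of B on its invariant subspace with basis {e_{(a, 2n−1−a)}}). Then the characteristic polynomial of N equals (X − u⁻¹)^n · (X + u)^{n−1} · (X + u^{2n+1}); equivalently, the eigenvalues of the braiding matrix B on this subspace are q^{−1/4} = u⁻¹ with multiplicity n, −q^{1/4} = −u with multiplicity n−1, and −q^{(2n+1)/4} = −u^{2n+1} with multiplicity 1. -/

import Mathlib

/-!
On `dₐ = eₐ - u eₐ₊₁` the matrix `N` acts by `N dₐ = (u⁻¹ - u) dₐ - d₂ₙ₋₂₋ₐ` for `a < n - 1` and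
`N dₐ = -d₂ₙ₋₂₋ₐ` for `n ≤ a < 2n - 1` (consecutive columns of `N` are geometric with ratio `u`
away from the diagonal and the antidiagonal). Hence each plane spanned by `dⱼ, d₂ₙ₋₂₋ⱼ`
(`j < n - 1`) is stable, with eigenvalues `u⁻¹` and `-u`. Adding the eigenvectors
`eₙ₋₁ + u² eₙ` (for `u⁻¹`) and the geometric vector `z` with `zₐ = -u^{2n-a}` (`a < n`),
`zₐ = u^{2n-1-a}` (`a ≥ n`) (for `-u^{2n+1}`, by a telescoping sum) gives `2n` eigenvectors.
They are independent: the three eigenvalues are distinct, and within each eigenvalue the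
vectors are triangular. So `N` is diagonalizable with the stated spectrum.
-/

noncomputable section

/-- The coefficient field `K = ℂ(u)`, the field of rational functions in `u`
over `ℂ` (`u` plays the role of `q^{1/4}`, `q = u⁴`). -/
abbrev FK : Type := RatFunc ℂ

/-- The variable `u` of `K = ℂ(u)`. -/
def U : FK := RatFunc.X

/-- The imaginary unit `i ∈ ℂ ⊆ ℂ(u)`. -/
def IC : FK := RatFunc.C Complex.I

/-- The fusion matrix `M` of the fundamental `2n`-dimensional representation of
`C_n`: `M_{a,b} = 0` if `b ≠ 2n-1-a`, `M_{a,2n-1-a} = i·u^{n-a-1}` for `a ≥ n`,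
and `M_{a,2n-1-a} = -i·u^{n-a}` for `a < n`. -/
def MC (n a b : ℕ) : FK :=
  if a + b + 1 = 2 * n then
    if n ≤ a then IC * U ^ ((n : ℤ) - a - 1) else -IC * U ^ ((n : ℤ) - a)
  else 0

/-- The wall-crossing coefficients `β_a^b` (`a < b`) of the braiding matrix
of `C_n`: `(u - u⁻¹)u^{b-a}` if `a, b` are both `≤ n-1` or both `≥ n`, and
`(u⁻¹ - u)u^{b-a+1} + δ_{a,2n-1-b}(u⁻¹ - u)` otherwise. -/
def betaC (n a b : ℕ) : FK :=
  if (a < n ∧ b < n) ∨ (n ≤ a ∧ n ≤ b) then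
    (U - U⁻¹) * U ^ ((b : ℤ) - a)
  else
    (U⁻¹ - U) * U ^ ((b : ℤ) - a + 1) +
      (if a + b + 1 = 2 * n then U⁻¹ - U else 0)

/-- Coefficients of the braiding matrix of `C_n`:
`BC n b d a c = B^{bd}_{ac}`, the coefficient of `e_{(b,d)}` in `B e_{(a,c)}`.
For `a + c ≠ 2n-1`: `B e_{(a,c)} = u⁻¹ e_{(a,c)}` if `a = c`,
`B e_{(a,c)} = e_{(c,a)}` if `a > c`, and
`B e_{(a,c)} = e_{(c,a)} + (u⁻¹ - u) e_{(a,c)}` if `a < c`.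
For `a + c = 2n-1`:
`B e_{(a,2n-1-a)} = u e_{(2n-1-a,a)} + Σ_{b=a+1}^{2n-1} β_a^b e_{(2n-1-b,b)}`. -/
def BC (n b d a c : ℕ) : FK :=
  if a + c + 1 = 2 * n then
    if b + d + 1 = 2 * n then
      if d = a then U else if a < d then betaC n a d else 0
    else 0
  else if a = c then (if b = a ∧ d = c then U⁻¹ else 0)
  else if c < a then (if b = c ∧ d = a then 1 else 0)
  else (if b = c ∧ d = a then (1 : FK) else 0) +
    (if b = a ∧ d = c then U⁻¹ - U else 0)

/-- The braiding matrix `B` of `C_n` as a matrix indexed by pairs `(a, c)`,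
with `BmatC n (b, d) (a, c) = B^{bd}_{ac}`. -/
def BmatC (n : ℕ) :
    Matrix (Fin (2 * n) × Fin (2 * n)) (Fin (2 * n) × Fin (2 * n)) FK :=
  Matrix.of fun p q => BC n p.1 p.2 q.1 q.2

/-- The matrix of the braiding `B` of `C_n` on its invariant subspace with
basis `{e_{(a, 2n-1-a)} : 0 ≤ a ≤ 2n-1}`. -/
def NC (n : ℕ) : Matrix (Fin (2 * n)) (Fin (2 * n)) FK :=
  Matrix.of fun b a => BC n b (2 * n - 1 - (b : ℕ)) a (2 * n - 1 - (a : ℕ))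

theorem Module.End.eq_zero_of_add_add_eq_zero {K V : Type*} [Field K] [AddCommGroup V]
    [Module K V] (f : V →ₗ[K] V) {a b c : K} (hab : a ≠ b) (hac : a ≠ c) {x y z : V}
    (hx : f x = a • x) (hy : f y = b • y) (hz : f z = c • z) (h : x + y + z = 0) : x = 0 := by
  have h₁ : a • x + b • y + c • z = 0 := by rw [← hx, ← hy, ← hz, ← map_add, ← map_add, h, map_zero]
  have h₂ : a • a • x + b • b • y + c • c • z = 0 := by
    rw [← hx, ← hy, ← hz, ← map_smul, ← map_smul, ← map_smul, ← map_add, ← map_add, h₁, map_zero]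
  have key : ((a - b) * (a - c)) • x = 0 := by
    linear_combination (norm := module) h₂ - (b + c) • h₁ + (b * c) • h
  exact (smul_eq_zero.mp key).resolve_left (mul_ne_zero (sub_ne_zero.mpr hab) (sub_ne_zero.mpr hac))

open Finset in
theorem eq_zero_of_sum_mul_eq_zero_of_triangular {R : Type*} [Semiring R] [NoZeroDivisors R]
    {m : ℕ} {c : ℕ → R} {f : ℕ → ℕ → R} (hdiag : ∀ j < m, f j j ≠ 0)
    (hlow : ∀ j < m, ∀ b < j, f j b = 0) (h : ∀ b < m, ∑ j ∈ range m, c j * f j b = 0) :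
    ∀ j < m, c j = 0 := by
  intro j
  induction j using Nat.strong_induction_on with
  | _ j ih =>
    intro hj
    have hsum := h j hj
    rw [sum_eq_single j (fun k hk hkj => ?_) (fun hj' => absurd (mem_range.mpr hj) hj')] at hsum
    · exact (mul_eq_zero.mp hsum).resolve_right (hdiag j hj)
    · rcases lt_or_gt_of_ne hkj with hlt | hlt
      · rw [ih k hlt (by omega), zero_mul]
      · rw [hlow k (mem_range.mp hk) j hlt, mul_zero]

namespace CnBraiding

open Finset Polynomial Matrix

lemma U_ne_zero : U ≠ 0 := RatFunc.X_ne_zero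

lemma U_pow_eq_algebraMap (m : ℕ) : U ^ m = algebraMap ℂ[X] FK (X ^ m) := by
  rw [map_pow, RatFunc.algebraMap_X]
  rfl

lemma U_pow_ne_neg_one (m : ℕ) : U ^ m ≠ -1 := by
  intro h
  rw [U_pow_eq_algebraMap, ← map_one (algebraMap ℂ[X] FK), ← map_neg] at h
  have := congrArg (eval 0) (RatFunc.algebraMap_injective ℂ h)
  rcases m with _ | m <;> norm_num at this

lemma U_pow_ne_one {m : ℕ} (hm : m ≠ 0) : U ^ m ≠ 1 := by
  intro h
  rw [U_pow_eq_algebraMap, ← map_one (algebraMap ℂ[X] FK)] at h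
  have := congrArg (eval 0) (RatFunc.algebraMap_injective ℂ h)
  simp [hm] at this

lemma U_inv_ne_neg_U : U⁻¹ ≠ -U := by
  intro h
  apply U_pow_ne_neg_one 2
  field_simp [U_ne_zero] at h
  linear_combination h

lemma U_inv_ne_neg_U_pow (n : ℕ) : U⁻¹ ≠ -U ^ (2 * n + 1) := by
  intro h
  apply U_pow_ne_neg_one (2 * n + 2)
  field_simp [U_ne_zero] at h
  linear_combination h

lemma neg_U_ne_neg_U_pow {n : ℕ} (hn : n ≠ 0) : -U ≠ -U ^ (2 * n + 1) := by
  intro h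
  apply U_pow_ne_one (show 2 * n ≠ 0 by omega)
  apply mul_left_cancel₀ U_ne_zero
  linear_combination h

def entry (n b a : ℕ) : FK :=
  if a + b + 1 = 2 * n then U
  else if 2 * n < a + b + 1 then 0
  else if a < n ∧ b < n then
    (U⁻¹ - U) * U ^ (2 * n - a - b) + if a = b then U⁻¹ - U else 0
  else (U - U⁻¹) * U ^ (2 * n - 1 - a - b)

lemma NC_apply (n : ℕ) (b a : Fin (2 * n)) : NC n b a = entry n b a := by
  have hb := b.isLt
  have ha := a.isLt
  simp only [NC, Matrix.of_apply, BC, betaC, entry]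
  rw [if_pos (by omega), if_pos (by omega)]
  by_cases hanti : (a : ℕ) + b + 1 = 2 * n
  · rw [if_pos (by omega), if_pos hanti]
  rw [if_neg (by omega), if_neg hanti]
  by_cases hzero : 2 * n < (a : ℕ) + b + 1
  · rw [if_neg (by omega), if_pos hzero]
  rw [if_pos (by omega), if_neg hzero]
  by_cases hboth : (a : ℕ) < n ∧ (b : ℕ) < n
  · rw [if_neg (by omega), if_pos hboth,
      show ((2 * n - 1 - b : ℕ) : ℤ) - a + 1 = ((2 * n - a - b : ℕ) : ℤ) by omega, zpow_natCast]
    simp only [show (a : ℕ) + (2 * n - 1 - b) + 1 = 2 * n ↔ (a : ℕ) = b by omega]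
  · rw [if_pos (by omega), if_neg hboth,
      show ((2 * n - 1 - b : ℕ) : ℤ) - a = ((2 * n - 1 - a - b : ℕ) : ℤ) by omega, zpow_natCast]

section entry

variable {n a b : ℕ}

lemma entry_antidiag (h : a + b + 1 = 2 * n) : entry n b a = U := by
  rw [entry, if_pos h]

lemma entry_eq_zero (h : 2 * n < a + b + 1) : entry n b a = 0 := by
  rw [entry, if_neg (by omega), if_pos h]

lemma entry_of_lt_of_lt (h : a + b + 1 < 2 * n) (ha : a < n) (hb : b < n) :
    entry n b a = (U⁻¹ - U) * U ^ (2 * n - a - b) + if a = b then U⁻¹ - U else 0 := by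
  rw [entry, if_neg (by omega), if_neg (by omega), if_pos ⟨ha, hb⟩]

lemma entry_of_not_lt (h : a + b + 1 < 2 * n) (hab : ¬(a < n ∧ b < n)) :
    entry n b a = (U - U⁻¹) * U ^ (2 * n - 1 - a - b) := by
  rw [entry, if_neg (by omega), if_neg (by omega), if_neg hab]

end entry

def diffVec (a : ℕ) : ℕ → FK := Pi.single a 1 - U • Pi.single (a + 1) 1

lemma diffVec_apply (a b : ℕ) :
    diffVec a b = (if b = a then 1 else 0) - U * if b = a + 1 then 1 else 0 := by
  simp [diffVec, Pi.single_apply]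

lemma diffVec_apply_self (a : ℕ) : diffVec a a = 1 := by
  simp [diffVec_apply]

lemma diffVec_apply_of_lt {a b : ℕ} (h : b < a) : diffVec a b = 0 := by
  rw [diffVec_apply, if_neg (by omega), if_neg (by omega), mul_zero, sub_zero]

lemma diffVec_apply_of_gt {a b : ℕ} (h : a + 1 < b) : diffVec a b = 0 := by
  rw [diffVec_apply, if_neg (by omega), if_neg (by omega), mul_zero, sub_zero]

section column_differences

variable {n a b : ℕ}

lemma entry_sub_mul_entry_succ_of_lt (ha : a + 1 < n) (hb : b < n) :
    entry n b a - U * entry n b (a + 1) = (U⁻¹ - U) * diffVec a b := by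
  rw [entry_of_lt_of_lt (by omega) (by omega) hb, entry_of_lt_of_lt (by omega) ha hb,
    show 2 * n - a - b = 2 * n - (a + 1) - b + 1 by omega, pow_succ, diffVec_apply]
  split_ifs <;> first | omega | ring

lemma entry_sub_mul_entry_succ_of_not_lt (hab : ¬(a < n ∧ b < n)) (ha : a + 1 ≠ n)
    (ha' : a + 1 < 2 * n) :
    entry n b a - U * entry n b (a + 1) = -diffVec (2 * n - 2 - a) b := by
  rcases lt_trichotomy (a + b + 2) (2 * n) with h | h | h
  · rw [entry_of_not_lt (by omega) hab, entry_of_not_lt (by omega) (by omega),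
      show 2 * n - 1 - a - b = 2 * n - 1 - (a + 1) - b + 1 by omega, pow_succ,
      diffVec_apply_of_lt (by omega)]
    ring
  · rw [entry_of_not_lt (by omega) hab, entry_antidiag (by omega), diffVec_apply,
      if_pos (by omega), if_neg (by omega), show 2 * n - 1 - a - b = 1 by omega]
    field_simp [U_ne_zero]
    ring
  · rcases eq_or_lt_of_le (Nat.le_of_lt_succ h) with h' | h'
    · rw [entry_antidiag (by omega), entry_eq_zero (by omega), diffVec_apply,
        if_neg (by omega), if_pos (by omega)]
      ring
    · rw [entry_eq_zero (by omega), entry_eq_zero (by omega), diffVec_apply_of_gt (by omega)]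
      ring

end column_differences

def col (n a : ℕ) : ℕ → FK := fun b => entry n b a

/-- `N` acting on `ℕ`-indexed vectors (coordinates `≥ 2n` are ignored), so that index
arithmetic such as `2n - 2 - a` needs no `Fin` casts. -/
def act (n : ℕ) : (ℕ → FK) →ₗ[FK] ℕ → FK :=
  ∑ a ∈ range (2 * n), (LinearMap.proj a).smulRight (col n a)

lemma act_apply (n : ℕ) (v : ℕ → FK) : act n v = ∑ a ∈ range (2 * n), v a • col n a := by
  simp [act]

lemma act_apply_apply (n : ℕ) (v : ℕ → FK) (b : ℕ) :
    act n v b = ∑ a ∈ range (2 * n), entry n b a * v a := by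
  simp [act_apply, col, mul_comm]

lemma act_single {n a : ℕ} (ha : a < 2 * n) : act n (Pi.single a 1) = col n a := by
  rw [act_apply, Finset.sum_eq_single a (fun c _ hc => by simp [hc])
    (fun h => absurd (mem_range.mpr ha) h)]
  simp

lemma act_diffVec {n a : ℕ} (ha : a + 1 < 2 * n) :
    act n (diffVec a) = col n a - U • col n (a + 1) := by
  rw [diffVec, map_sub, map_smul, act_single (by omega), act_single ha]

lemma act_diffVec_of_lt {n a : ℕ} (ha : a + 1 < n) :
    act n (diffVec a) = (U⁻¹ - U) • diffVec a - diffVec (2 * n - 2 - a) := by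
  rw [act_diffVec (by omega)]
  ext b
  simp only [Pi.sub_apply, Pi.smul_apply, smul_eq_mul, col]
  by_cases hb : b < n
  · rw [entry_sub_mul_entry_succ_of_lt ha hb, diffVec_apply_of_lt (show b < 2 * n - 2 - a by omega),
      sub_zero]
  · rw [entry_sub_mul_entry_succ_of_not_lt (by omega) (by omega) (by omega),
      diffVec_apply_of_gt (show a + 1 < b by omega), mul_zero, zero_sub]

lemma act_diffVec_of_le {n a : ℕ} (ha : n ≤ a) (ha' : a + 1 < 2 * n) :
    act n (diffVec a) = -diffVec (2 * n - 2 - a) := by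
  rw [act_diffVec ha']
  ext b
  simp only [Pi.sub_apply, Pi.smul_apply, Pi.neg_apply, smul_eq_mul, col]
  exact entry_sub_mul_entry_succ_of_not_lt (by omega) (by omega) ha'

/-- `N` acts on the plane spanned by `diffVec j`, `diffVec (2n - 2 - j)` by
`[[u⁻¹ - u, -1], [-1, 0]]`; this and `pairVecNegU` are its eigenvectors. -/
def pairVecInvU (n j : ℕ) : ℕ → FK := diffVec j - U • diffVec (2 * n - 2 - j)

def pairVecNegU (n j : ℕ) : ℕ → FK := U • diffVec j + diffVec (2 * n - 2 - j)

lemma act_pairVecInvU {n j : ℕ} (hj : j + 1 < n) :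
    act n (pairVecInvU n j) = U⁻¹ • pairVecInvU n j := by
  rw [pairVecInvU, map_sub, map_smul, act_diffVec_of_lt hj, act_diffVec_of_le (by omega) (by omega),
    show 2 * n - 2 - (2 * n - 2 - j) = j by omega]
  ext b
  simp only [Pi.sub_apply, Pi.smul_apply, Pi.neg_apply, smul_eq_mul]
  field_simp [U_ne_zero]
  ring

lemma act_pairVecNegU {n j : ℕ} (hj : j + 1 < n) :
    act n (pairVecNegU n j) = (-U) • pairVecNegU n j := by
  rw [pairVecNegU, map_add, map_smul, act_diffVec_of_lt hj, act_diffVec_of_le (by omega) (by omega),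
    show 2 * n - 2 - (2 * n - 2 - j) = j by omega]
  ext b
  simp only [Pi.add_apply, Pi.sub_apply, Pi.smul_apply, Pi.neg_apply, smul_eq_mul]
  field_simp [U_ne_zero]
  ring

def midVec (n : ℕ) : ℕ → FK := Pi.single (n - 1) 1 + U ^ 2 • Pi.single n 1

lemma entry_sub_one_add_sq_mul_entry (n b : ℕ) (hn : 1 ≤ n) :
    entry n b (n - 1) + U ^ 2 * entry n b n = U⁻¹ * midVec n b := by
  simp only [midVec, Pi.add_apply, Pi.smul_apply, Pi.single_apply, smul_eq_mul]
  rcases lt_trichotomy (b + 1) n with hb | hb | hb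
  · rw [entry_of_lt_of_lt (by omega) (by omega) (by omega), entry_of_not_lt (by omega) (by omega),
      if_neg (by omega), if_neg (by omega), if_neg (by omega),
      show 2 * n - (n - 1) - b = 2 * n - 1 - n - b + 2 by omega, pow_add]
    ring
  · rw [entry_of_lt_of_lt (by omega) (by omega) (by omega), entry_antidiag (by omega),
      if_pos (by omega), if_pos (by omega), if_neg (by omega),
      show 2 * n - (n - 1) - b = 2 by omega]
    field_simp [U_ne_zero]
    ring
  · rcases eq_or_lt_of_le (Nat.le_of_lt_succ hb) with hb' | hb'
    · rw [entry_antidiag (by omega), entry_eq_zero (by omega), if_neg (by omega),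
        if_pos (by omega)]
      field_simp [U_ne_zero]
      ring
    · rw [entry_eq_zero (by omega), entry_eq_zero (by omega), if_neg (by omega),
        if_neg (by omega)]
      ring

lemma act_midVec {n : ℕ} (hn : 1 ≤ n) : act n (midVec n) = U⁻¹ • midVec n := by
  ext b
  rw [midVec, map_add, map_smul, act_single (by omega), act_single (by omega)]
  exact entry_sub_one_add_sq_mul_entry n b hn

def geomVec (n a : ℕ) : FK :=
  if a < n then -U ^ (2 * n - a) else if a < 2 * n then U ^ (2 * n - 1 - a) else 0

-- Each summand of `(N z)_b` is a difference `f a - f (a + 1)`; the cut-off in `f` absorbs the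
-- antidiagonal entry.
section telescoping

variable {n a b : ℕ}

lemma entry_mul_geomVec_of_lt_of_lt (ha : a < n) (hb : b < n) :
    entry n b a * geomVec n a = U ^ (4 * n + 1 - 2 * a - b) - U ^ (4 * n + 1 - 2 * (a + 1) - b) +
      if a = b then (U - U⁻¹) * U ^ (2 * n - b) else 0 := by
  obtain ⟨c, hc⟩ : ∃ c, 2 * n = a + b + 2 + c := ⟨2 * n - a - b - 2, by omega⟩
  rw [entry_of_lt_of_lt (by omega) ha hb, geomVec, if_pos ha, show 2 * n - a - b = c + 2 by omega,
    show 2 * n - a = b + c + 2 by omega, show 4 * n + 1 - 2 * a - b = 2 * c + b + 5 by omega,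
    show 4 * n + 1 - 2 * (a + 1) - b = 2 * c + b + 3 by omega]
  split_ifs with hab
  · rw [show 2 * n - b = a + c + 2 by omega, hab]
    field_simp [U_ne_zero]
    ring
  · field_simp [U_ne_zero]
    ring

lemma entry_mul_geomVec_of_lt_add (hb : b < n) (i : ℕ) :
    entry n b (n + i) * geomVec n (n + i) =
      (if i + b + 1 ≤ n then U ^ (2 * n - 1 - 2 * i - b) else 0) -
        if i + 1 + b + 1 ≤ n then U ^ (2 * n - 1 - 2 * (i + 1) - b) else 0 := by
  rcases lt_trichotomy (i + b + 1) n with h | h | h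
  · obtain ⟨c, hc⟩ : ∃ c, n = i + b + 2 + c := ⟨n - i - b - 2, by omega⟩
    rw [entry_of_not_lt (by omega) (by omega), geomVec, if_neg (by omega), if_pos (by omega),
      if_pos (by omega), if_pos (by omega), show 2 * n - 1 - (n + i) - b = c + 1 by omega,
      show 2 * n - 1 - (n + i) = b + c + 1 by omega,
      show 2 * n - 1 - 2 * i - b = 2 * c + b + 3 by omega,
      show 2 * n - 1 - 2 * (i + 1) - b = 2 * c + b + 1 by omega]
    field_simp [U_ne_zero]
    ring
  · rw [entry_antidiag (by omega), geomVec, if_neg (by omega), if_pos (by omega), if_pos (by omega),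
      if_neg (by omega), show 2 * n - 1 - (n + i) = b by omega,
      show 2 * n - 1 - 2 * i - b = b + 1 by omega]
    ring
  · rw [entry_eq_zero (by omega), if_neg (by omega), if_neg (by omega)]
    ring

lemma entry_mul_geomVec_of_le (hb : n ≤ b) (ha : a < n) :
    entry n b a * geomVec n a =
      (if a + b + 1 ≤ 2 * n then -U ^ (4 * n - 2 * a - b) else 0) -
        if a + 1 + b + 1 ≤ 2 * n then -U ^ (4 * n - 2 * (a + 1) - b) else 0 := by
  rw [geomVec, if_pos ha]
  rcases lt_trichotomy (a + b + 1) (2 * n) with h | h | h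
  · obtain ⟨c, hc⟩ : ∃ c, 2 * n = a + b + 2 + c := ⟨2 * n - a - b - 2, by omega⟩
    rw [entry_of_not_lt (by omega) (by omega), if_pos (by omega), if_pos (by omega),
      show 2 * n - 1 - a - b = c + 1 by omega, show 2 * n - a = b + c + 2 by omega,
      show 4 * n - 2 * a - b = 2 * c + b + 4 by omega,
      show 4 * n - 2 * (a + 1) - b = 2 * c + b + 2 by omega]
    field_simp [U_ne_zero]
    ring
  · rw [entry_antidiag h, if_pos (by omega), if_neg (by omega),
      show 2 * n - a = b + 1 by omega, show 4 * n - 2 * a - b = b + 2 by omega]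
    ring
  · rw [entry_eq_zero h, if_neg (by omega), if_neg (by omega)]
    ring

end telescoping

lemma act_geomVec (n : ℕ) : act n (geomVec n) = (-U ^ (2 * n + 1)) • geomVec n := by
  ext b
  rw [act_apply_apply, Pi.smul_apply, smul_eq_mul, two_mul, sum_range_add]
  by_cases hb : b < n
  · rw [sum_congr rfl fun a ha => entry_mul_geomVec_of_lt_of_lt (mem_range.mp ha) hb,
      sum_congr rfl fun i _ => entry_mul_geomVec_of_lt_add hb i,
      sum_add_distrib, sum_ite_eq', if_pos (mem_range.mpr hb),
      sum_range_sub' (fun a => U ^ (4 * n + 1 - 2 * a - b)),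
      sum_range_sub' (fun i => if i + b + 1 ≤ n then U ^ (2 * n - 1 - 2 * i - b) else 0),
      if_pos (by omega), if_neg (by omega), geomVec, if_pos hb]
    obtain ⟨c, hc⟩ : ∃ c, n = b + 1 + c := ⟨n - b - 1, by omega⟩
    rw [show 4 * n + 1 - 2 * 0 - b = 2 * n + 1 + (2 * n - b) by omega,
      show 4 * n + 1 - 2 * n - b = 2 * c + b + 3 by omega, show 2 * n - b = 2 * c + b + 2 by omega,
      show 2 * n - 1 - 2 * 0 - b = 2 * c + b + 1 by omega]
    field_simp [U_ne_zero]
    ring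
  have hzero : ∀ i ∈ range n, entry n b (n + i) * geomVec n (n + i) = 0 := fun i _ => by
    rw [entry_eq_zero (by omega), zero_mul]
  rw [sum_eq_zero hzero, add_zero]
  by_cases hb' : b < 2 * n
  · rw [sum_congr rfl fun a ha => entry_mul_geomVec_of_le (not_lt.mp hb) (mem_range.mp ha),
      sum_range_sub' (fun a => if a + b + 1 ≤ 2 * n then -U ^ (4 * n - 2 * a - b) else 0),
      if_pos (by omega), if_neg (by omega), geomVec, if_neg hb, if_pos hb',
      show 4 * n - 2 * 0 - b = 2 * n + 1 + (2 * n - 1 - b) by omega, pow_add]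
    ring
  · rw [sum_eq_zero fun a _ => by rw [entry_eq_zero (by omega), zero_mul], geomVec, if_neg hb,
      if_neg hb', mul_zero]

def eigvec (n j : ℕ) : ℕ → FK :=
  if j + 1 < n then pairVecInvU n j
  else if j + 1 = n then midVec n
  else if j + 1 < 2 * n then pairVecNegU n (j - n)
  else geomVec n

def eigval (n j : ℕ) : FK :=
  if j < n then U⁻¹ else if j + 1 < 2 * n then -U else -U ^ (2 * n + 1)

lemma act_eigvec {n j : ℕ} (hj : j < 2 * n) : act n (eigvec n j) = eigval n j • eigvec n j := by
  unfold eigvec eigval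
  split_ifs <;> first
    | omega
    | exact act_pairVecInvU (by omega)
    | exact act_midVec (by omega)
    | exact act_pairVecNegU (by omega)
    | exact act_geomVec n

lemma NC_mulVec (n : ℕ) (v : ℕ → FK) :
    NC n *ᵥ LinearMap.funLeft FK FK Fin.val v = LinearMap.funLeft FK FK Fin.val (act n v) := by
  ext b
  simp only [Matrix.mulVec, dotProduct, NC_apply, LinearMap.funLeft_apply,
    act_apply_apply]
  exact Fin.sum_univ_eq_sum_range (fun a => entry n b a * v a) (2 * n)

def eigmat (n : ℕ) : Matrix (Fin (2 * n)) (Fin (2 * n)) FK := Matrix.of fun i j => eigvec n j i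

lemma NC_mul_eigmat (n : ℕ) :
    NC n * eigmat n = eigmat n * diagonal fun j : Fin (2 * n) => eigval n j := by
  ext b j
  rw [Matrix.mul_diagonal, Matrix.mul_apply]
  have := congrFun (NC_mulVec n (eigvec n j)) b
  simp only [Matrix.mulVec, dotProduct, LinearMap.funLeft_apply] at this
  simp only [eigmat, Matrix.of_apply, this, act_eigvec j.isLt, Pi.smul_apply, smul_eq_mul, mul_comm]

lemma act_sum_smul_eigvec {n : ℕ} {s : Finset ℕ} {μ : FK} (hs : ∀ j ∈ s, j < 2 * n ∧ eigval n j = μ)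
    (c : ℕ → FK) : act n (∑ j ∈ s, c j • eigvec n j) = μ • ∑ j ∈ s, c j • eigvec n j := by
  rw [map_sum, smul_sum]
  refine sum_congr rfl fun j hj => ?_
  rw [map_smul, act_eigvec (hs j hj).1, (hs j hj).2, smul_comm]

lemma eigvec_apply_self {n j : ℕ} (hj : j < n) : eigvec n j j = 1 := by
  by_cases h : j + 1 < n
  · rw [eigvec, if_pos h, pairVecInvU, Pi.sub_apply, Pi.smul_apply, diffVec_apply_self,
      diffVec_apply_of_lt (by omega), smul_zero, sub_zero]
  · rw [eigvec, if_neg h, if_pos (by omega), midVec, Pi.add_apply, Pi.smul_apply,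
      Pi.single_eq_of_ne (show j ≠ n by omega), smul_zero, add_zero, show j = n - 1 by omega,
      Pi.single_eq_same]

lemma eigvec_apply_of_lt {n j b : ℕ} (hj : j < n) (hb : b < j) : eigvec n j b = 0 := by
  by_cases h : j + 1 < n
  · rw [eigvec, if_pos h, pairVecInvU, Pi.sub_apply, Pi.smul_apply, diffVec_apply_of_lt hb,
      diffVec_apply_of_lt (by omega), smul_zero, sub_zero]
  · rw [eigvec, if_neg h, if_pos (by omega), midVec, Pi.add_apply, Pi.smul_apply,
      Pi.single_eq_of_ne (show b ≠ n - 1 by omega), Pi.single_eq_of_ne (show b ≠ n by omega),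
      smul_zero, add_zero]

lemma eigvec_add_apply_self {n t : ℕ} (ht : t + 1 < n) : eigvec n (n + t) t = U := by
  rw [eigvec, if_neg (by omega), if_neg (by omega), if_pos (by omega), Nat.add_sub_cancel_left,
    pairVecNegU, Pi.add_apply, Pi.smul_apply, diffVec_apply_self, diffVec_apply_of_lt (by omega),
    smul_eq_mul, mul_one, add_zero]

lemma eigvec_add_apply_of_lt {n t b : ℕ} (ht : t + 1 < n) (hb : b < t) :
    eigvec n (n + t) b = 0 := by
  rw [eigvec, if_neg (by omega), if_neg (by omega), if_pos (by omega), Nat.add_sub_cancel_left,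
    pairVecNegU, Pi.add_apply, Pi.smul_apply, diffVec_apply_of_lt hb,
    diffVec_apply_of_lt (by omega), smul_zero, add_zero]

lemma eigvec_last_apply_last {n : ℕ} (hn : 1 ≤ n) : eigvec n (2 * n - 1) (2 * n - 1) = 1 := by
  rw [eigvec, if_neg (by omega), if_neg (by omega), if_neg (by omega), geomVec, if_neg (by omega),
    if_pos (by omega), show 2 * n - 1 - (2 * n - 1) = 0 by omega, pow_zero]

lemma mulVecLin_funLeft_of_act_eq_smul {n : ℕ} {v : ℕ → FK} {μ : FK} (hv : act n v = μ • v) :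
    (NC n).mulVecLin (LinearMap.funLeft FK FK Fin.val v) =
      μ • LinearMap.funLeft FK FK Fin.val v := by
  rw [mulVecLin_apply, NC_mulVec, hv, map_smul]

lemma eq_zero_of_sum_range_smul_eigvec {n : ℕ} {c : ℕ → FK}
    (h : ∀ b < n, (∑ j ∈ range n, c j • eigvec n j) b = 0) : ∀ j < n, c j = 0 :=
  eq_zero_of_sum_mul_eq_zero_of_triangular (f := eigvec n)
    (fun j hj => by rw [eigvec_apply_self hj]; exact one_ne_zero)
    (fun j hj b hb => eigvec_apply_of_lt hj hb)
    (fun b hb => by simpa [Finset.sum_apply] using h b hb)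

lemma eq_zero_of_sum_Ico_smul_eigvec {n : ℕ} {c : ℕ → FK}
    (h : ∀ b < n - 1, (∑ j ∈ Ico n (2 * n - 1), c j • eigvec n j) b = 0) :
    ∀ j ∈ Ico n (2 * n - 1), c j = 0 := by
  have key := eq_zero_of_sum_mul_eq_zero_of_triangular (m := n - 1) (c := fun t => c (n + t))
    (f := fun t => eigvec n (n + t))
    (fun t ht => by rw [eigvec_add_apply_self (by omega)]; exact U_ne_zero)
    (fun t ht b hb => eigvec_add_apply_of_lt (by omega) hb)
    (fun b hb => by
      have := h b hb
      rwa [sum_Ico_eq_sum_range, show 2 * n - 1 - n = n - 1 by omega, Finset.sum_apply] at this)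
  intro j hj
  have := mem_Ico.mp hj
  simpa [Nat.add_sub_cancel' this.1] using key (j - n) (by omega)

lemma eq_zero_of_funLeft_sum_smul_eigvec_eq_zero {n : ℕ} (hn : 1 ≤ n) {c : ℕ → FK}
    (h : LinearMap.funLeft FK FK (Fin.val : Fin (2 * n) → ℕ)
      (∑ j ∈ range (2 * n), c j • eigvec n j) = 0) :
    ∀ j < 2 * n, c j = 0 := by
  set R := LinearMap.funLeft FK FK (Fin.val : Fin (2 * n) → ℕ)
  set x := ∑ j ∈ range n, c j • eigvec n j
  set y := ∑ j ∈ Ico n (2 * n - 1), c j • eigvec n j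
  set z := c (2 * n - 1) • eigvec n (2 * n - 1)
  have hsplit : ∑ j ∈ range (2 * n), c j • eigvec n j = x + y + z := by
    rw [show 2 * n = 2 * n - 1 + 1 by omega, sum_range_succ,
      ← sum_range_add_sum_Ico _ (show n ≤ 2 * n - 1 by omega)]
  have hsum : R x + R y + R z = 0 := by rw [← map_add, ← map_add, ← hsplit, h]
  have hx : (NC n).mulVecLin (R x) = U⁻¹ • R x :=
    mulVecLin_funLeft_of_act_eq_smul <| act_sum_smul_eigvec (fun j hj => by
      have := mem_range.mp hj
      exact ⟨by omega, by rw [eigval, if_pos this]⟩) c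
  have hy : (NC n).mulVecLin (R y) = (-U) • R y :=
    mulVecLin_funLeft_of_act_eq_smul <| act_sum_smul_eigvec (fun j hj => by
      have := mem_Ico.mp hj
      exact ⟨by omega, by rw [eigval, if_neg (by omega), if_pos (by omega)]⟩) c
  have hz : (NC n).mulVecLin (R z) = (-U ^ (2 * n + 1)) • R z :=
    mulVecLin_funLeft_of_act_eq_smul <| by
      rw [map_smul, act_eigvec (by omega), eigval, if_neg (by omega), if_neg (by omega),
        smul_comm]
  have hx0 := Module.End.eq_zero_of_add_add_eq_zero _ U_inv_ne_neg_U (U_inv_ne_neg_U_pow n)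
    hx hy hz hsum
  have hy0 := Module.End.eq_zero_of_add_add_eq_zero _ U_inv_ne_neg_U.symm
    (neg_U_ne_neg_U_pow (by omega)) hy hx hz (by rw [← hsum]; abel)
  have hz0 : R z = 0 := by rw [← hsum, hx0, hy0, zero_add, zero_add]
  have hvanish {v : ℕ → FK} (hv : R v = 0) {b : ℕ} (hb : b < 2 * n) : v b = 0 :=
    congrFun hv ⟨b, hb⟩
  have hcx := eq_zero_of_sum_range_smul_eigvec fun b hb => hvanish hx0 (show b < 2 * n by omega)
  have hcy := eq_zero_of_sum_Ico_smul_eigvec fun b hb => hvanish hy0 (show b < 2 * n by omega)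
  have hcz : c (2 * n - 1) = 0 := by
    simpa [z, eigvec_last_apply_last hn] using hvanish hz0 (show 2 * n - 1 < 2 * n by omega)
  intro j hj
  rcases lt_or_ge j n with h1 | h1
  · exact hcx j h1
  rcases lt_or_ge j (2 * n - 1) with h2 | h2
  · exact hcy j (mem_Ico.mpr ⟨h1, h2⟩)
  · rwa [show j = 2 * n - 1 by omega]

lemma isUnit_eigmat {n : ℕ} (hn : 1 ≤ n) : IsUnit (eigmat n) := by
  rw [← mulVec_injective_iff_isUnit, ← coe_mulVecLin, injective_iff_map_eq_zero]
  intro c hc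
  set c' : ℕ → FK := fun j => if h : j < 2 * n then c ⟨j, h⟩ else 0
  have hmul : (eigmat n).mulVecLin c =
      LinearMap.funLeft FK FK Fin.val (∑ j ∈ range (2 * n), c' j • eigvec n j) := by
    ext i
    rw [mulVecLin_apply, mulVec, dotProduct, LinearMap.funLeft_apply, Finset.sum_apply,
      ← Fin.sum_univ_eq_sum_range (fun j => (c' j • eigvec n j) i)]
    simp [c', eigmat, mul_comm (c _)]
  ext j
  have := eq_zero_of_funLeft_sum_smul_eigvec_eq_zero hn (hmul ▸ hc) j j.isLt
  simpa [c'] using this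

lemma charpoly_NC {n : ℕ} (hn : 1 ≤ n) :
    (NC n).charpoly = ∏ j : Fin (2 * n), (X - C (eigval n j)) := by
  obtain ⟨P, hP⟩ := isUnit_eigmat hn
  have hconj : P⁻¹.val * NC n * P.val = diagonal fun j : Fin (2 * n) => eigval n j := by
    rw [mul_assoc, hP, NC_mul_eigmat, ← mul_assoc, ← hP, Units.inv_mul, one_mul]
  rw [← charpoly_units_conj' P (NC n), ← coe_units_inv, hconj, charpoly_diagonal]

lemma prod_X_sub_C_eigval {n : ℕ} (hn : 1 ≤ n) :
    ∏ j : Fin (2 * n), (X - C (eigval n j)) =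
      (X - C U⁻¹) ^ n * (X + C U) ^ (n - 1) * (X + C (U ^ (2 * n + 1))) := by
  have h₁ : ∀ j ∈ range n, X - C (eigval n j) = X - C U⁻¹ := fun j hj => by
    rw [eigval, if_pos (mem_range.mp hj)]
  have h₂ : ∀ j ∈ range (n - 1), X - C (eigval n (n + j)) = X + C U := fun j hj => by
    rw [eigval, if_neg (by omega), if_pos (by have := mem_range.mp hj; omega), C_neg,
      sub_neg_eq_add]
  have h₃ : X - C (eigval n (n + (n - 1))) = X + C (U ^ (2 * n + 1)) := by
    rw [eigval, if_neg (by omega), if_neg (by omega), C_neg, sub_neg_eq_add]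
  rw [Fin.prod_univ_eq_prod_range (fun j => X - C (eigval n j))]
  conv_lhs => rw [show 2 * n = n + (n - 1) + 1 by omega]
  rw [prod_range_succ, prod_range_add, prod_congr rfl h₁,
    prod_congr rfl h₂, h₃, prod_const, prod_const, card_range, card_range]

end CnBraiding

/-- The characteristic polynomial of the braiding matrix of `C_n` on the
invariant subspace with basis `{e_{(a,2n-1-a)}}` is
`(X - u⁻¹)^n (X + u)^{n-1} (X + u^{2n+1})`: the eigenvalues are
`q^{-1/4} = u⁻¹` with multiplicity `n`, `-q^{1/4} = -u` with multiplicity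
`n-1`, and `-q^{(2n+1)/4} = -u^{2n+1}` with multiplicity `1`. -/
theorem stmt14 (n : ℕ) (hn : 1 ≤ n) :
    (NC n).charpoly =
      (Polynomial.X - Polynomial.C U⁻¹) ^ n *
        (Polynomial.X + Polynomial.C U) ^ (n - 1) *
        (Polynomial.X + Polynomial.C (U ^ (2 * (n : ℤ) + 1))) := by
  rw [CnBraiding.charpoly_NC hn, CnBraiding.prod_X_sub_C_eigval hn,
    show 2 * (n : ℤ) + 1 = ((2 * n + 1 : ℕ) : ℤ) by push_cast; ring, zpow_natCast]

end
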